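/- arXiv:2206.05026 — 2 statements merged into one kernel-verified Lean document; each statement's English description precedes it below -/
import Mathlib

section
/- For every positive integer m, the infinite series ∑_{n=0}^∞ (1/16)^n · C(2n,n)² · 1/(2n+1−2m) equals −(16^m / (2π·m²·C(2m,m)²)) · ∑_{k=0}^{m−1} (1/16)^k · C(2k,k)². -/
open Real

noncomputable def catalanG : ℝ := ∑' n : ℕ, (-1 : ℝ)^n / (2*(n:ℝ)+1)^2

noncomputable def scriptG : ℝ :=
  (∑' n : ℕ, ((1 + Complex.I)/2)^(n+1) / ((n : ℂ)+1)^3).im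

noncomputable def oddHarmonic (k : ℕ) : ℝ := ∑ i ∈ Finset.range k, 1/(2*(i:ℝ)+1)

noncomputable def harm (k : ℕ) : ℝ := ∑ i ∈ Finset.range k, 1/((i:ℝ)+1)

open Filter Finset Topology

noncomputable def AA (n : ℕ) : ℝ := (1/16 : ℝ)^n * ((Nat.choose (2*n) n : ℝ))^2

lemma AA_pos (n : ℕ) : 0 < AA n := by
  have h : 0 < Nat.choose (2*n) n := Nat.choose_pos (by omega)
  have h' : (0:ℝ) < (Nat.choose (2*n) n : ℝ) := by exact_mod_cast h
  unfold AA; positivity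

lemma AA_rec (n : ℕ) : (2*(n:ℝ)+2)^2 * AA (n+1) = (2*(n:ℝ)+1)^2 * AA n := by
  have h := Nat.succ_mul_centralBinom_succ n
  have h' : ((n:ℝ)+1) * (Nat.choose (2*(n+1)) (n+1) : ℝ)
      = 2*(2*(n:ℝ)+1) * (Nat.choose (2*n) n : ℝ) := by
    have := congrArg (Nat.cast : ℕ → ℝ) h
    push_cast [Nat.centralBinom] at this
    convert this using 2 <;> push_cast <;> ring
  unfold AA
  linear_combination ((1/16:ℝ)^n/4 * (((n:ℝ)+1)*(Nat.choose (2*(n+1)) (n+1):ℝ)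
    + 2*(2*(n:ℝ)+1)*(Nat.choose (2*n) n:ℝ))) * h'

lemma AA_eq (n : ℕ) : AA (n+1) = (2*(n:ℝ)+1)^2 * AA n / (2*(n:ℝ)+2)^2 := by
  have h := AA_rec n
  have h2 : (2*(n:ℝ)+2)^2 ≠ 0 := by positivity
  field_simp
  linarith [h]

-- key nonzero helper
lemma key_ne (x : ℝ) (k : ℤ) (hx : x = 2*(k:ℝ)+1) : x ≠ 0 := by
  rw [hx]
  intro h
  have : ((2*k+1 : ℤ) : ℝ) = 0 := by push_cast; linarith
  have h2 : (2*k+1 : ℤ) = 0 := by exact_mod_cast this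
  omega

-- Wallis consequence
lemma wallis_AA (n : ℕ) : (2*(n:ℝ)+1) * AA n * Real.Wallis.W n = 1 := by
  have hW := Real.Wallis.W_eq_factorial_ratio n
  have hfact : ((Nat.choose (2*n) n : ℝ)) * (Nat.factorial n : ℝ) * (Nat.factorial n : ℝ)
      = (Nat.factorial (2*n) : ℝ) := by
    have h := Nat.choose_mul_factorial_mul_factorial (show n ≤ 2*n by omega)
    have h2 : 2*n - n = n := by omega
    rw [h2] at h
    exact_mod_cast congrArg (Nat.cast : ℕ → ℝ) h
  rw [hW]
  unfold AA
  have hf : (Nat.factorial n : ℝ) ≠ 0 := by positivity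
  have hf2 : (Nat.factorial (2*n) : ℝ) ≠ 0 := by positivity
  have h2n : (2*(n:ℝ)+1) ≠ 0 := by positivity
  have h16 : ((2:ℝ))^(4*n) = 16^n := by
    rw [pow_mul]; norm_num
  field_simp
  rw [h16]
  linear_combination ((Nat.choose (2*n) n : ℝ) * (Nat.factorial n : ℝ) * (Nat.factorial n : ℝ) + (Nat.factorial (2*n) : ℝ)) * hfact + ((Nat.choose (2*n) n : ℝ)^2 * (Nat.factorial n : ℝ)^4) * (by rw [← mul_pow]; norm_num : (1/16:ℝ)^n * 16^n = 1)

lemma tendsto_L1 : Tendsto (fun n : ℕ => (2*(n:ℝ)+1) * AA n) atTop (𝓝 (2/π)) := by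
  have hne : (π/2 : ℝ) ≠ 0 := by positivity
  have h := (Real.Wallis.tendsto_W_nhds_pi_div_two).inv₀ hne
  have h2 : ((π:ℝ)/2)⁻¹ = 2/π := by
    rw [inv_div]
  rw [h2] at h
  refine h.congr (fun n => ?_)
  have hW := wallis_AA n
  have hWpos := Real.Wallis.W_pos n
  field_simp
  linarith [hW]

lemma tendsto_AA_zero : Tendsto (fun n : ℕ => AA n) atTop (𝓝 0) := by
  have hinv : Tendsto (fun n : ℕ => (2*(n:ℝ)+1)⁻¹) atTop (𝓝 0) := by
    apply Tendsto.comp tendsto_inv_atTop_zero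
    apply tendsto_atTop_add_const_right
    exact tendsto_natCast_atTop_atTop.const_mul_atTop two_pos
  have h := tendsto_L1.mul hinv
  rw [mul_zero] at h
  refine h.congr (fun n => ?_)
  have hne : (2*(n:ℝ)+1) ≠ 0 := by positivity
  field_simp

lemma tendsto_L2 : Tendsto (fun n : ℕ => 2*(n:ℝ) * AA n) atTop (𝓝 (2/π)) := by
  have h := tendsto_L1.sub tendsto_AA_zero
  rw [sub_zero] at h
  refine h.congr (fun n => ?_)
  ring

lemma AA_le (n : ℕ) : (2*(n:ℝ)+1) * AA n ≤ 1 := by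
  induction n with
  | zero => simp [AA]
  | succ n ih =>
    have hr := AA_rec n
    have hp := AA_pos n
    have hp1 := AA_pos (n+1)
    push_cast
    nlinarith [hr, hp, hp1, ih]

lemma summable_AA (b : ℝ) (hb : ∀ n : ℕ, 2*(n:ℝ) + b ≠ 0) :
    Summable (fun n : ℕ => AA n / (2*(n:ℝ) + b)) := by
  obtain ⟨K, hK⟩ := exists_nat_ge ((1 - b)/2)
  rw [← summable_nat_add_iff K]
  have hs : Summable (fun n : ℕ => (1/((n:ℝ)+1))^2) := by
    have h0 : Summable (fun n : ℕ => 1/((n:ℝ))^2) :=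
      Real.summable_one_div_nat_pow.mpr (by norm_num)
    have := (summable_nat_add_iff 1).mpr h0
    refine this.congr (fun n => ?_)
    push_cast
    rw [div_pow]
    norm_num
  refine Summable.of_nonneg_of_le (fun n => ?_) (fun n => ?_) hs
  · have hden : (0:ℝ) < 2*((n+K : ℕ):ℝ) + b := by
      push_cast; nlinarith [hK]
    exact le_of_lt (div_pos (AA_pos _) hden)
  · have hden : ((n:ℝ)+1) ≤ 2*((n+K : ℕ):ℝ) + b := by
      push_cast; nlinarith [hK]
    have hden0 : (0:ℝ) < 2*((n+K : ℕ):ℝ) + b := by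
      push_cast; nlinarith [hK]
    have hAle : ((n:ℝ)+1) * AA (n+K) ≤ 1 := by
      have h1 := AA_le (n+K)
      have h2 : ((n:ℝ)+1) ≤ 2*((n+K:ℕ):ℝ)+1 := by push_cast; nlinarith
      nlinarith [AA_pos (n+K)]
    have hn1 : (0:ℝ) < (n:ℝ)+1 := by positivity
    rw [div_pow, one_pow, div_le_div_iff₀ hden0 (by positivity)]
    nlinarith [AA_pos (n+K)]

noncomputable def Pf (j : ℕ) (n : ℕ) : ℝ := AA n / (2*(n:ℝ) - 2*(j:ℝ) - 1)
noncomputable def Qf (j : ℕ) (n : ℕ) : ℝ := AA n / (2*(n:ℝ) - 2*(j:ℝ) + 1)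

lemma sumP (j : ℕ) : Summable (Pf j) := by
  have h := summable_AA (-2*(j:ℝ)-1)
    (fun n => by
      have := key_ne (2*(n:ℝ) + (-2*(j:ℝ)-1)) ((n:ℤ)-(j:ℤ)-1) (by push_cast; ring)
      exact this)
  refine h.congr (fun n => ?_)
  unfold Pf; ring_nf

lemma sumQ (j : ℕ) : Summable (Qf j) := by
  have h := summable_AA (-2*(j:ℝ)+1)
    (fun n => by
      have := key_ne (2*(n:ℝ) + (-2*(j:ℝ)+1)) ((n:ℤ)-(j:ℤ)) (by push_cast; ring)
      exact this)
  refine h.congr (fun n => ?_)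
  unfold Qf; ring_nf

lemma QP (j : ℕ) : Qf (j+1) = Pf j := by
  funext n
  unfold Pf Qf
  push_cast
  ring_nf

lemma I1 (N : ℕ) : ∑ n ∈ range N, Pf 0 n = -4*(N:ℝ)^2 * AA N / (2*(N:ℝ)-1) := by
  induction N with
  | zero => simp
  | succ N ih =>
    rw [sum_range_succ, ih]
    have hA1 := AA_eq N
    have h1 : 2*(N:ℝ)-1 ≠ 0 := key_ne _ ((N:ℤ)-1) (by push_cast; ring)
    have h2 : 2*((N:ℝ)+1)-1 ≠ 0 := key_ne _ (N:ℤ) (by push_cast; ring)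
    have h3 : (2*(N:ℝ)+2) ≠ 0 := by positivity
    unfold Pf
    push_cast
    rw [hA1]
    have h4 : 2*(N:ℝ)-2*0-1 ≠ 0 := by intro h; apply h1; linarith
    have h4' : 2*((N:ℝ)-0)-1 ≠ 0 := by intro h; apply h1; linarith
    have h1' : (N:ℝ)*2-1 ≠ 0 := by intro h; apply h1; linarith
    field_simp
    ring

lemma I2 (j N : ℕ) : ∑ n ∈ range N,
    ((2*(j:ℝ)+3)^2/4 * Pf (j+1) n - (((j:ℝ)+1)^2 + (2*(j:ℝ)+1)^2/4) * Pf j n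
      + (j:ℝ)^2 * Qf j n)
    = -2*(N:ℝ)^2 * AA N / ((2*(N:ℝ)-2*(j:ℝ)-1) * (2*(N:ℝ)-2*(j:ℝ)-3)) := by
  induction N with
  | zero => norm_num
  | succ N ih =>
    rw [sum_range_succ, ih]
    have hA1 := AA_eq N
    have h1 : 2*(N:ℝ)-2*(j:ℝ)-1 ≠ 0 := key_ne _ ((N:ℤ)-(j:ℤ)-1) (by push_cast; ring)
    have h2 : 2*(N:ℝ)-2*(j:ℝ)-3 ≠ 0 := key_ne _ ((N:ℤ)-(j:ℤ)-2) (by push_cast; ring)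
    have h3 : 2*(N:ℝ)-2*(j:ℝ)+1 ≠ 0 := key_ne _ ((N:ℤ)-(j:ℤ)) (by push_cast; ring)
    have h4 : 2*((N:ℝ)+1)-2*(j:ℝ)-1 ≠ 0 := key_ne _ ((N:ℤ)-(j:ℤ)) (by push_cast; ring)
    have h5 : 2*((N:ℝ)+1)-2*(j:ℝ)-3 ≠ 0 := key_ne _ ((N:ℤ)-(j:ℤ)-1) (by push_cast; ring)
    have h6 : (2*(N:ℝ)+2) ≠ 0 := by positivity
    have h7 : 2*(N:ℝ)-2*((j:ℝ)+1)-1 ≠ 0 := by intro h; apply h2; linarith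
    have g1 : 2*((N:ℝ)-j)-1 ≠ 0 := by intro h; apply h1; linarith
    have g2 : 2*((N:ℝ)-j)-3 ≠ 0 := by intro h; apply h2; linarith
    have g3 : 2*((N:ℝ)-(j+1))-1 ≠ 0 := by intro h; apply h2; linarith
    have g4 : 2*((N:ℝ)-j)+1 ≠ 0 := by intro h; apply h3; linarith
    have g5 : 2*((N:ℝ)+1-j)-1 ≠ 0 := by intro h; apply h4; linarith
    have g6 : 2*((N:ℝ)+1-j)-3 ≠ 0 := by intro h; apply h5; linarith
    unfold Pf Qf
    push_cast
    rw [hA1]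
    field_simp
    ring

lemma tendsto_inv_shift (c : ℝ) : Tendsto (fun N : ℕ => 1/(2*(N:ℝ)+c)) atTop (𝓝 0) := by
  have h : Tendsto (fun N : ℕ => 2*(N:ℝ)+c) atTop atTop := by
    apply tendsto_atTop_add_const_right
    exact tendsto_natCast_atTop_atTop.const_mul_atTop two_pos
  have := Tendsto.comp tendsto_inv_atTop_zero h
  refine this.congr (fun n => ?_)
  simp [one_div]

lemma base_tsum : (∑' n, Pf 0 n) = -2/π := by
  have hs := sumP 0
  have h1 := hs.hasSum.tendsto_sum_nat
  have hfrac : Tendsto (fun N : ℕ => -(2*(N:ℝ))/(2*(N:ℝ)-1)) atTop (𝓝 (-1)) := by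
    have hinv := tendsto_inv_shift (-1)
    have h := (tendsto_const_nhds : Tendsto (fun _ : ℕ => (1:ℝ)) atTop (𝓝 1)).add hinv
    rw [add_zero] at h
    have h' := h.neg
    refine h'.congr' ?_
    filter_upwards [eventually_gt_atTop 0] with N hN
    have hne : 2*(N:ℝ)-1 ≠ 0 := key_ne _ ((N:ℤ)-1) (by push_cast; ring)
    have he : 2*(N:ℝ)+(-1) = 2*(N:ℝ)-1 := by ring
    rw [he]
    field_simp
    ring
  have h2 : Tendsto (fun N : ℕ => ∑ n ∈ range N, Pf 0 n) atTop (𝓝 (-2/π)) := by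
    have hmul := tendsto_L2.mul hfrac
    have hval : (2/π) * (-1) = -2/π := by ring
    rw [hval] at hmul
    refine hmul.congr (fun N => ?_)
    rw [I1]
    ring
  exact tendsto_nhds_unique h1 h2

lemma wz_tendsto (j : ℕ) :
    Tendsto (fun N : ℕ => -2*(N:ℝ)^2 * AA N / ((2*(N:ℝ)-2*(j:ℝ)-1) * (2*(N:ℝ)-2*(j:ℝ)-3)))
      atTop (𝓝 0) := by
  have hfrac : Tendsto (fun N : ℕ => -(N:ℝ)/((2*(N:ℝ)-2*(j:ℝ)-1) * (2*(N:ℝ)-2*(j:ℝ)-3)))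
      atTop (𝓝 0) := by
    refine squeeze_zero_norm' ?_ tendsto_one_div_atTop_nhds_zero_nat
    filter_upwards [eventually_ge_atTop (2*j+3)] with N hN
    have hN' : (2*(j:ℝ)+3) ≤ (N:ℝ) := by exact_mod_cast hN
    have hNpos : (0:ℝ) < N := by linarith
    have hd1 : (0:ℝ) < 2*(N:ℝ)-2*(j:ℝ)-1 := by linarith
    have hd2 : (0:ℝ) < 2*(N:ℝ)-2*(j:ℝ)-3 := by linarith
    rw [Real.norm_eq_abs, abs_div, abs_neg, abs_of_nonneg hNpos.le,
      abs_of_nonneg (by positivity : (0:ℝ) ≤ (2*(N:ℝ)-2*(j:ℝ)-1) * (2*(N:ℝ)-2*(j:ℝ)-3))]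
    rw [div_le_div_iff₀ (by positivity) hNpos]
    nlinarith
  have hmul := tendsto_L2.mul hfrac
  rw [mul_zero] at hmul
  refine hmul.congr (fun N => ?_)
  ring
lemma wz_tsum (j : ℕ) :
    (2*(j:ℝ)+3)^2/4 * (∑' n, Pf (j+1) n) - (((j:ℝ)+1)^2 + (2*(j:ℝ)+1)^2/4) * (∑' n, Pf j n)
      + (j:ℝ)^2 * (∑' n, Qf j n) = 0 := by
  have hsum : Summable (fun n => (2*(j:ℝ)+3)^2/4 * Pf (j+1) n
      - (((j:ℝ)+1)^2 + (2*(j:ℝ)+1)^2/4) * Pf j n + (j:ℝ)^2 * Qf j n) :=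
    (((sumP (j+1)).mul_left _).sub ((sumP j).mul_left _)).add ((sumQ j).mul_left _)
  have h1 := hsum.hasSum.tendsto_sum_nat
  have h2 : Tendsto (fun N : ℕ => ∑ n ∈ range N, ((2*(j:ℝ)+3)^2/4 * Pf (j+1) n
      - (((j:ℝ)+1)^2 + (2*(j:ℝ)+1)^2/4) * Pf j n + (j:ℝ)^2 * Qf j n)) atTop (𝓝 0) := by
    refine (wz_tendsto j).congr (fun N => ?_)
    rw [I2]
  have h0 : (∑' n, ((2*(j:ℝ)+3)^2/4 * Pf (j+1) n
      - (((j:ℝ)+1)^2 + (2*(j:ℝ)+1)^2/4) * Pf j n + (j:ℝ)^2 * Qf j n)) = 0 :=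
    tendsto_nhds_unique h1 h2
  rw [Summable.tsum_add (((sumP (j+1)).mul_left _).sub ((sumP j).mul_left _)) ((sumQ j).mul_left _),
    Summable.tsum_sub ((sumP (j+1)).mul_left _) ((sumP j).mul_left _),
    tsum_mul_left, tsum_mul_left, tsum_mul_left] at h0
  linarith [h0]

lemma KL (j : ℕ) : (2*(j:ℝ)+1)^2/4 * (∑' n, Pf j n) - (j:ℝ)^2 * (∑' n, Qf j n)
    = -(1/(2*π)) := by
  induction j with
  | zero =>
    simp only [Nat.cast_zero]
    rw [base_tsum]
    have hπ := Real.pi_ne_zero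
    field_simp
    ring
  | succ j ih =>
    have hwz := wz_tsum j
    rw [QP j]
    push_cast
    linear_combination hwz + ih

lemma u_form (m : ℕ) : (m:ℝ)^2 * AA m * (∑' n, Qf m n)
    = -(1/(2*π)) * ∑ k ∈ range m, AA k := by
  induction m with
  | zero => simp
  | succ m ih =>
    rw [sum_range_succ, QP m]
    have hKL := KL m
    have hrec := AA_rec m
    push_cast
    linear_combination ((∑' n, Pf m n)/4) * hrec + AA m * hKL + ih

theorem stmt12 (m : ℕ) (hm : 0 < m) :
    ∑' n : ℕ, (1/16 : ℝ)^n * ((Nat.choose (2*n) n : ℝ))^2 / (2*(n:ℝ)+1-2*(m:ℝ)) =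
    -((16:ℝ)^m / (2*π*(m:ℝ)^2*((Nat.choose (2*m) m : ℝ))^2)) *
      ∑ k ∈ Finset.range m, (1/16 : ℝ)^k * ((Nat.choose (2*k) k : ℝ))^2 := by
  have hQ : (∑' n : ℕ, (1/16:ℝ)^n * ((Nat.choose (2*n) n : ℝ))^2 / (2*(n:ℝ)+1-2*(m:ℝ)))
      = ∑' n, Qf m n := by
    apply tsum_congr
    intro n
    unfold Qf AA
    ring_nf
  have hS : (∑ k ∈ Finset.range m, (1/16:ℝ)^k * ((Nat.choose (2*k) k : ℝ))^2)
      = ∑ k ∈ range m, AA k := rfl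
  rw [hQ, hS]
  have hu := u_form m
  have hC : ((Nat.choose (2*m) m : ℝ)) ≠ 0 := by
    have : 0 < Nat.choose (2*m) m := Nat.choose_pos (by omega)
    exact_mod_cast this.ne'
  have hAA : AA m ≠ 0 := (AA_pos m).ne'
  have hm' : (m:ℝ) ≠ 0 := Nat.cast_ne_zero.mpr hm.ne'
  have hπ := Real.pi_ne_zero
  have h16 : (16:ℝ)^m * (1/16:ℝ)^m = 1 := by rw [← mul_pow]; norm_num
  have hne : ((m:ℝ)^2 * AA m) ≠ 0 := by
    apply mul_ne_zero _ hAA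
    positivity
  apply mul_left_cancel₀ hne
  rw [hu]
  have hAAm : AA m = (1/16:ℝ)^m * ((Nat.choose (2*m) m : ℝ))^2 := rfl
  rw [hAAm]
  field_simp
  ring_nf
  linear_combination (∑ k ∈ range m, AA k) * h16
end

section
/- For every integer p ≥ 0 and every real z with 0 < z ≤ 1/2, setting θ := arcsin(2z), one has ∑_{n=0}^∞ C(2n,n)·z^{2n+1}/(2n+1)^{p+1} = (θ/2)·ln^p(2·sin θ)/p! + (1/(4·p!))·∑_{j=1}^{p} (−1)^{j−1}·C(p,j)·ln^{p−j}(2·sin θ)·Ls_{j+1}(2θ), where Ls_{j+1}(2θ) := −∫₀^{2θ} ln^{j}(2·sin(t/2)) dt. -/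
open Real

section Stmt19Aux

open Real Filter MeasureTheory Set intervalIntegral

namespace Stmt19


noncomputable def coefA (k : ℕ) (β : ℝ) (r : ℕ) : ℝ :=
  (k.factorial : ℝ) / (r.factorial : ℝ) * (β⁻¹)^(k+1-r)

noncomputable def gAux (m k : ℕ) (c : ℝ) (u : ℝ) : ℝ :=
  u^(m+1) * ∑ r ∈ Finset.range (k+1), coefA k ((m:ℝ)+1) r * (Real.log c - Real.log u)^r

lemma telescope (k : ℕ) (β L : ℝ) (hβ : β ≠ 0) :
    ∑ r ∈ Finset.range (k+1), coefA k β r * (β * L^r - r * L^(r-1)) = L^k := by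
  have key : ∀ r ∈ Finset.range (k+1),
      coefA k β r * (β * L^r - r * L^(r-1)) =
      ((k.factorial : ℝ)/(r.factorial) * (β⁻¹)^(k-r) * L^r)
        - (if r = 0 then 0 else
            ((k.factorial : ℝ)/((r-1).factorial) * (β⁻¹)^(k-(r-1)) * L^(r-1))) := by
    intro r hr
    have hrk : r ≤ k := Nat.lt_succ_iff.mp (Finset.mem_range.mp hr)
    rw [mul_sub]
    congr 1
    · have h1 : k + 1 - r = (k - r) + 1 := by omega
      rw [coefA, h1, pow_succ]
      field_simp
    · rcases r with _ | j
      · simp [coefA]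
      · simp only [Nat.succ_ne_zero, if_false, Nat.succ_sub_one]
        have h1 : k + 1 - (j+1) = k - j := by omega
        rw [coefA, h1, Nat.factorial_succ]
        push_cast
        have : ((j:ℝ) + 1) ≠ 0 := by positivity
        field_simp
  rw [Finset.sum_congr rfl key, Finset.sum_sub_distrib]
  rw [Finset.sum_range_succ' (fun r => if r = 0 then (0:ℝ) else
      ((k.factorial : ℝ)/((r-1).factorial) * (β⁻¹)^(k-(r-1)) * L^(r-1))) k]
  simp only [Nat.succ_ne_zero, if_false, Nat.add_sub_cancel, if_true]
  rw [Finset.sum_range_succ]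
  simp [Nat.sub_self]
  rw [div_self (show (k.factorial:ℝ) ≠ 0 by exact_mod_cast k.factorial_ne_zero), one_mul]

lemma hasDerivAt_gAux (m k : ℕ) (c : ℝ) {u : ℝ} (hu : 0 < u) :
    HasDerivAt (gAux m k c) (u^m * (Real.log c - Real.log u)^k) u := by
  have hβ : ((m:ℝ)+1) ≠ 0 := by positivity
  have hlog : HasDerivAt (fun v : ℝ => Real.log c - Real.log v) (-u⁻¹) u :=
    (Real.hasDerivAt_log hu.ne').const_sub _
  have hterm : ∀ r ∈ Finset.range (k+1),
      HasDerivAt (fun v => coefA k ((m:ℝ)+1) r * (Real.log c - Real.log v)^r)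
        (coefA k ((m:ℝ)+1) r * ((r:ℝ) * (Real.log c - Real.log u)^(r-1) * (-u⁻¹))) u :=
    fun r _ => ((hlog.pow r).const_mul _)
  have hsum := HasDerivAt.fun_sum hterm
  have hpow : HasDerivAt (fun v : ℝ => v^(m+1)) (((m:ℝ)+1) * u^m) u := by
    have := hasDerivAt_pow (m+1) u
    simpa using this
  have hmul := hpow.mul hsum
  have heq : (((m:ℝ)+1) * u^m) * (∑ r ∈ Finset.range (k+1),
        coefA k ((m:ℝ)+1) r * (Real.log c - Real.log u)^r)
      + u^(m+1) * (∑ r ∈ Finset.range (k+1),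
        coefA k ((m:ℝ)+1) r * ((r:ℝ) * (Real.log c - Real.log u)^(r-1) * (-u⁻¹)))
      = u^m * (Real.log c - Real.log u)^k := by
    rw [← telescope k ((m:ℝ)+1) (Real.log c - Real.log u) hβ]
    rw [Finset.mul_sum, Finset.mul_sum, Finset.mul_sum, ← Finset.sum_add_distrib]
    refine Finset.sum_congr rfl fun r _ => ?_
    have hupow : u^(m+1) * u⁻¹ = u^m := by
      rw [pow_succ]; field_simp
    field_simp
    ring
  rw [← heq]
  exact hmul




lemma tendsto_mul_log_pow (c : ℝ) (r : ℕ) :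
    Tendsto (fun u : ℝ => u * (Real.log c - Real.log u)^r) (nhdsWithin 0 (Set.Ioi 0)) (nhds 0) := by
  have h1 : Tendsto (fun u : ℝ => -Real.log u) (nhdsWithin 0 (Set.Ioi 0)) atTop :=
    tendsto_neg_atBot_atTop.comp Real.tendsto_log_nhdsGT_zero
  have houter : Tendsto (fun x : ℝ => Real.exp (-x) * (Real.log c + x)^r) atTop (nhds 0) := by
    have hsum : Tendsto (fun x : ℝ => ∑ i ∈ Finset.range (r+1),
        (Real.log c)^i * ((r.choose i : ℝ)) * (x^(r-i) * Real.exp (-x))) atTop (nhds 0) := by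
      have : Tendsto (fun x : ℝ => ∑ i ∈ Finset.range (r+1),
          (Real.log c)^i * ((r.choose i : ℝ)) * (x^(r-i) * Real.exp (-x))) atTop
          (nhds (∑ i ∈ Finset.range (r+1), (Real.log c)^i * ((r.choose i : ℝ)) * 0)) := by
        refine tendsto_finset_sum _ fun i _ => ?_
        exact (Real.tendsto_pow_mul_exp_neg_atTop_nhds_zero (r-i)).const_mul _
      simpa using this
    refine hsum.congr fun x => ?_
    rw [add_pow, Finset.mul_sum]
    exact Finset.sum_congr rfl fun i _ => by ring
  have := houter.comp h1
  refine this.congr' ?_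
  filter_upwards [self_mem_nhdsWithin] with u hu
  simp only [Function.comp_apply, neg_neg, Real.exp_log (mem_Ioi.mp hu), sub_eq_add_neg]

lemma gAux_zero (m k : ℕ) (c : ℝ) : gAux m k c 0 = 0 := by simp [gAux]

lemma tendsto_gAux_zero (m k : ℕ) (c : ℝ) :
    Tendsto (gAux m k c) (nhdsWithin 0 (Set.Ioi 0)) (nhds 0) := by
  have h : Tendsto (fun u : ℝ => ∑ r ∈ Finset.range (k+1),
      coefA k ((m:ℝ)+1) r * (u^m * (u * (Real.log c - Real.log u)^r)))
      (nhdsWithin 0 (Set.Ioi 0)) (nhds 0) := by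
    have : Tendsto (fun u : ℝ => ∑ r ∈ Finset.range (k+1),
        coefA k ((m:ℝ)+1) r * (u^m * (u * (Real.log c - Real.log u)^r)))
        (nhdsWithin 0 (Set.Ioi 0))
        (nhds (∑ r ∈ Finset.range (k+1), coefA k ((m:ℝ)+1) r * ((0:ℝ)^m * 0))) := by
      refine tendsto_finset_sum _ fun r _ => ?_
      refine Tendsto.const_mul _ (Tendsto.mul ?_ (tendsto_mul_log_pow c r))
      exact ((continuous_pow m).tendsto 0).mono_left nhdsWithin_le_nhds
    simpa using this
  refine h.congr fun u => ?_
  rw [gAux, Finset.mul_sum]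
  exact Finset.sum_congr rfl fun r _ => by rw [pow_succ]; ring

lemma continuousAt_gAux (m k : ℕ) (c : ℝ) {u : ℝ} (hu : u ≠ 0) :
    ContinuousAt (gAux m k c) u := by
  refine (continuousAt_pow _ _).mul ?_
  have : ∀ r ∈ Finset.range (k+1), ContinuousAt
      (fun v : ℝ => coefA k ((m:ℝ)+1) r * (Real.log c - Real.log v)^r) u :=
    fun r _ => (((continuousAt_const.sub (Real.continuousAt_log hu)).pow r).const_mul _)
  exact tendsto_finset_sum _ this

lemma continuousOn_gAux_comp (m k : ℕ) (c b : ℝ) (φ : ℝ → ℝ)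
    (hφ : ContinuousOn φ (Set.Icc 0 b)) (hφ0 : φ 0 = 0)
    (hφpos : ∀ t ∈ Set.Icc 0 b, 0 < t → 0 < φ t) :
    ContinuousOn (fun t => gAux m k c (φ t)) (Set.Icc 0 b) := by
  intro t ht
  rcases eq_or_lt_of_le ht.1 with h0 | h0
  · subst h0
    rw [← continuousWithinAt_diff_self]
    have hmaps : Set.MapsTo φ (Set.Icc 0 b \ {0}) (Set.Ioi 0) := fun x hx =>
      hφpos x hx.1 (lt_of_le_of_ne hx.1.1 (Ne.symm hx.2))
    have h2 : Tendsto φ (nhdsWithin 0 (Set.Icc 0 b \ {0})) (nhdsWithin 0 (Set.Ioi 0)) := by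
      have := ((hφ 0 ht).mono Set.diff_subset).tendsto_nhdsWithin hmaps
      rwa [hφ0] at this
    have := (tendsto_gAux_zero m k c).comp h2
    rw [ContinuousWithinAt, hφ0, gAux_zero]
    exact this
  · have hpos := hφpos t ht h0
    exact (continuousAt_gAux m k c hpos.ne').comp_continuousWithinAt (hφ t ht)




lemma prod_eq_centralBinom (n : ℕ) :
    ∏ i ∈ Finset.range n, (2*(i:ℝ)+1)/(2*(i:ℝ)+2) = (Nat.centralBinom n : ℝ) / 4^n := by
  induction n with
  | zero => simp [Nat.centralBinom]
  | succ k ih =>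
    rw [Finset.prod_range_succ, ih]
    have hrec := Nat.succ_mul_centralBinom_succ k
    have hrecR : ((k:ℝ)+1) * (Nat.centralBinom (k+1) : ℝ)
        = 2 * (2*(k:ℝ)+1) * (Nat.centralBinom k : ℝ) := by exact_mod_cast hrec
    have hk1 : ((k:ℝ)+1) ≠ 0 := by positivity
    have h4 : (4:ℝ)^k ≠ 0 := by positivity
    field_simp
    linear_combination (-2*(4:ℝ)^k) * hrecR

lemma integral_sin_pow_eq (n : ℕ) :
    ∫ t in (0:ℝ)..π, Real.sin t ^ (2*n) = π * (Nat.centralBinom n : ℝ) / 4^n := by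
  rw [integral_sin_pow_even, prod_eq_centralBinom, mul_div_assoc]

lemma deriv_phi {a : ℝ} (ha : 0 ≤ a) (ha' : a < 1) {t : ℝ} (hc : Real.cos t ≠ 0) :
    HasDerivAt (fun t => Real.arctan (Real.sqrt (1-a) * Real.tan t) / Real.sqrt (1-a))
      ((1 - a * Real.sin t ^ 2)⁻¹) t := by
  set s := Real.sqrt (1-a) with hs
  have hspos : 0 < s := Real.sqrt_pos.mpr (by linarith)
  have hssq : s^2 = 1 - a := Real.sq_sqrt (by linarith)
  have h1 : HasDerivAt (fun t => s * Real.tan t) (s * (1 / Real.cos t ^ 2)) t :=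
    (Real.hasDerivAt_tan hc).const_mul s
  have h2 := (Real.hasDerivAt_arctan (s * Real.tan t)).comp t h1
  have h3 := h2.div_const s
  refine h3.congr_deriv ?_
  symm
  rw [Real.tan_eq_sin_div_cos]
  have hpyth := Real.sin_sq_add_cos_sq t
  have hden : 1 - a * Real.sin t ^ 2 > 0 := by nlinarith [Real.sin_sq_le_one t]
  field_simp
  linear_combination (Real.sin t^2) * hssq + hpyth

lemma deriv_psi {a : ℝ} (ha : 0 ≤ a) (ha' : a < 1) {t : ℝ} (hsin : Real.sin t ≠ 0) :
    HasDerivAt (fun t => -(Real.arctan (Real.cos t / (Real.sqrt (1-a) * Real.sin t))) / Real.sqrt (1-a))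
      ((1 - a * Real.sin t ^ 2)⁻¹) t := by
  set s := Real.sqrt (1-a) with hs
  have hspos : 0 < s := Real.sqrt_pos.mpr (by linarith)
  have hssq : s^2 = 1 - a := Real.sq_sqrt (by linarith)
  have hden : Real.sqrt (1-a) * Real.sin t ≠ 0 := mul_ne_zero hspos.ne' hsin
  have h1 : HasDerivAt (fun t => Real.cos t / (s * Real.sin t))
      (((-Real.sin t) * (s * Real.sin t) - Real.cos t * (s * Real.cos t)) / (s * Real.sin t)^2) t := by
    exact (Real.hasDerivAt_cos t).div ((Real.hasDerivAt_sin t).const_mul s) hden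
  have h2 := (Real.hasDerivAt_arctan (Real.cos t / (s * Real.sin t))).comp t h1
  have h3 := (h2.neg).div_const s
  refine h3.congr_deriv ?_
  symm
  have hpyth := Real.sin_sq_add_cos_sq t
  have hdenpos : 1 - a * Real.sin t ^ 2 > 0 := by nlinarith [Real.sin_sq_le_one t]
  field_simp
  linear_combination (Real.sin t^2) * hssq + (a * Real.sin t^2) * hpyth

lemma integral_one_div_one_sub_mul_sin_sq {a : ℝ} (ha : 0 ≤ a) (ha' : a < 1) :
    ∫ t in (0:ℝ)..π, (1 - a * Real.sin t ^ 2)⁻¹ = π / Real.sqrt (1-a) := by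
  set s := Real.sqrt (1-a) with hs
  have hspos : 0 < s := Real.sqrt_pos.mpr (by linarith)
  have hcont : Continuous fun t : ℝ => (1 - a * Real.sin t ^ 2)⁻¹ := by
    apply Continuous.inv₀
    · fun_prop
    · intro t
      have := Real.sin_sq_le_one t
      nlinarith
  have hint : ∀ u v : ℝ, IntervalIntegrable (fun t : ℝ => (1 - a * Real.sin t ^ 2)⁻¹) volume u v :=
    fun u v => hcont.intervalIntegrable u v
  have hpi : (0:ℝ) < π := Real.pi_pos
  -- piece 1 : [0, π/4]
  have hI1 : ∫ t in (0:ℝ)..(π/4), (1 - a * Real.sin t ^ 2)⁻¹ = Real.arctan s / s := by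
    rw [integral_eq_sub_of_hasDerivAt (f := fun t => Real.arctan (s * Real.tan t) / s)
      (fun t ht => ?_) (hint _ _)]
    · rw [Real.tan_pi_div_four, Real.tan_zero, mul_one, mul_zero, Real.arctan_zero, zero_div,
        sub_zero]
    · refine deriv_phi ha ha' (ne_of_gt (Real.cos_pos_of_mem_Ioo ⟨?_, ?_⟩))
      · rcases Set.mem_uIcc.mp ht with h | h <;> nlinarith [h.1, h.2]
      · rcases Set.mem_uIcc.mp ht with h | h <;> nlinarith [h.1, h.2]
  -- piece 2 : [π/4, 3π/4]
  have hI2 : ∫ t in (π/4 : ℝ)..(3*π/4), (1 - a * Real.sin t ^ 2)⁻¹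
      = 2 * (π/2 - Real.arctan s) / s := by
    rw [integral_eq_sub_of_hasDerivAt
      (f := fun t => -(Real.arctan (Real.cos t / (s * Real.sin t))) / s)
      (fun t ht => ?_) (hint _ _)]
    · have h34 : (3*π/4 : ℝ) = π - π/4 := by ring
      rw [h34, Real.cos_pi_sub, Real.sin_pi_sub, Real.cos_pi_div_four, Real.sin_pi_div_four]
      have hsqrt2 : Real.sqrt 2 / 2 ≠ 0 := by positivity
      have e1 : -(Real.sqrt 2 / 2) / (s * (Real.sqrt 2 / 2)) = -s⁻¹ := by
        field_simp
      have e2 : (Real.sqrt 2 / 2) / (s * (Real.sqrt 2 / 2)) = s⁻¹ := by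
        field_simp
      rw [e1, e2, Real.arctan_neg, Real.arctan_inv_of_pos hspos]
      ring
    · refine deriv_psi ha ha' (ne_of_gt (Real.sin_pos_of_pos_of_lt_pi ?_ ?_))
      · rcases Set.mem_uIcc.mp ht with h | h <;> nlinarith [h.1, h.2]
      · rcases Set.mem_uIcc.mp ht with h | h <;> nlinarith [h.1, h.2]
  -- piece 3 : [3π/4, π]
  have hI3 : ∫ t in (3*π/4 : ℝ)..π, (1 - a * Real.sin t ^ 2)⁻¹ = Real.arctan s / s := by
    rw [integral_eq_sub_of_hasDerivAt (f := fun t => Real.arctan (s * Real.tan t) / s)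
      (fun t ht => ?_) (hint _ _)]
    · have htanpi : Real.tan π = 0 := by
        rw [Real.tan_eq_sin_div_cos, Real.sin_pi, zero_div]
      have h34 : (3*π/4 : ℝ) = π - π/4 := by ring
      have htan34 : Real.tan (3*π/4) = -1 := by
        rw [h34, Real.tan_eq_sin_div_cos, Real.cos_pi_sub, Real.sin_pi_sub,
          Real.cos_pi_div_four, Real.sin_pi_div_four]
        have : Real.sqrt 2 / 2 ≠ 0 := by positivity
        field_simp
      rw [htanpi, htan34, mul_zero, Real.arctan_zero, zero_div, mul_neg_one,
        Real.arctan_neg]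
      ring
    · refine deriv_phi ha ha' (ne_of_lt (Real.cos_neg_of_pi_div_two_lt_of_lt ?_ ?_))
      · rcases Set.mem_uIcc.mp ht with h | h <;> nlinarith [h.1, h.2]
      · rcases Set.mem_uIcc.mp ht with h | h <;> nlinarith [h.1, h.2]
  have hsplit1 : ∫ t in (0:ℝ)..(3*π/4), (1 - a * Real.sin t ^ 2)⁻¹
      = (∫ t in (0:ℝ)..(π/4), (1 - a * Real.sin t ^ 2)⁻¹)
        + ∫ t in (π/4:ℝ)..(3*π/4), (1 - a * Real.sin t ^ 2)⁻¹ :=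
    (integral_add_adjacent_intervals (hint _ _) (hint _ _)).symm
  have hsplit2 : ∫ t in (0:ℝ)..π, (1 - a * Real.sin t ^ 2)⁻¹
      = (∫ t in (0:ℝ)..(3*π/4), (1 - a * Real.sin t ^ 2)⁻¹)
        + ∫ t in (3*π/4:ℝ)..π, (1 - a * Real.sin t ^ 2)⁻¹ :=
    (integral_add_adjacent_intervals (hint _ _) (hint _ _)).symm
  rw [hsplit2, hsplit1, hI1, hI2, hI3]
  field_simp
  ring




lemma centralBinom_le_four_pow (n : ℕ) : (Nat.centralBinom n : ℝ) ≤ 4^n := by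
  have h : Nat.centralBinom n ≤ 2 ^ (2*n) := by
    rw [Nat.centralBinom]
    calc (2*n).choose n ≤ ∑ m ∈ Finset.range (2*n+1), (2*n).choose m :=
          Finset.single_le_sum (fun i _ => Nat.zero_le _) (by
            exact Finset.mem_range.mpr (by omega))
      _ = 2 ^ (2*n) := Nat.sum_range_choose (2*n)
  calc (Nat.centralBinom n : ℝ) ≤ ((2:ℝ)) ^ (2*n) := by exact_mod_cast h
    _ = 4^n := by rw [pow_mul]; norm_num


lemma hasSum_centralBinom {x : ℝ} (hx0 : 0 ≤ x) (hx : x < 1/4) :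
    HasSum (fun n : ℕ => (Nat.centralBinom n : ℝ) * x^n) (1 / Real.sqrt (1 - 4*x)) := by
  have h40 : 0 ≤ 4*x := by linarith
  have h41 : 4*x < 1 := by linarith
  have hsummable : Summable (fun n : ℕ => (Nat.centralBinom n : ℝ) * x^n) := by
    refine Summable.of_nonneg_of_le (fun n => by positivity) (fun n => ?_)
      (summable_geometric_of_lt_one h40 h41)
    calc (Nat.centralBinom n : ℝ) * x^n ≤ 4^n * x^n := by
          apply mul_le_mul_of_nonneg_right (centralBinom_le_four_pow n) (by positivity)
      _ = (4*x)^n := (mul_pow 4 x n).symm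
  -- termwise integral
  have hterm : ∀ n : ℕ, ∫ t in (0:ℝ)..π, (4*x*Real.sin t^2)^n
      = π * ((Nat.centralBinom n : ℝ) * x^n) := by
    intro n
    have h1 : ∀ t : ℝ, (4*x*Real.sin t^2)^n = (4*x)^n * Real.sin t ^ (2*n) := by
      intro t; rw [mul_pow, ← pow_mul]
    simp_rw [h1]
    rw [intervalIntegral.integral_const_mul, integral_sin_pow_eq]
    have h4n : (4:ℝ)^n ≠ 0 := by positivity
    field_simp [mul_pow]
    ring
  -- interchange
  have hmeas : ∀ n : ℕ, AEStronglyMeasurable (fun t : ℝ => (4*x*Real.sin t^2)^n)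
      (volume.restrict (Ioc 0 π)) := fun n => (by fun_prop : Continuous fun t : ℝ =>
        (4*x*Real.sin t^2)^n).aestronglyMeasurable
  have hlint : ∑' n : ℕ, ∫⁻ t, ‖(4*x*Real.sin t^2)^n‖₊ ∂(volume.restrict (Ioc 0 π)) ≠ ⊤ := by
    have hb : ∀ n : ℕ, ∫⁻ t, ‖(4*x*Real.sin t^2)^n‖₊ ∂(volume.restrict (Ioc 0 π))
        ≤ ENNReal.ofReal ((4*x)^n) * ENNReal.ofReal π := by
      intro n
      have : ∀ t : ℝ, (‖(4*x*Real.sin t^2)^n‖₊ : ENNReal) ≤ ENNReal.ofReal ((4*x)^n) := by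
        intro t
        rw [← enorm_eq_nnnorm, Real.enorm_eq_ofReal_abs]
        apply ENNReal.ofReal_le_ofReal
        rw [abs_pow]
        apply pow_le_pow_left₀ (abs_nonneg _)
        rw [abs_of_nonneg (by nlinarith [sq_nonneg (Real.sin t)])]
        nlinarith [Real.sin_sq_le_one t]
      calc ∫⁻ t, ‖(4*x*Real.sin t^2)^n‖₊ ∂(volume.restrict (Ioc 0 π))
          ≤ ∫⁻ _, ENNReal.ofReal ((4*x)^n) ∂(volume.restrict (Ioc 0 π)) :=
            lintegral_mono (fun t => this t)
        _ = ENNReal.ofReal ((4*x)^n) * ENNReal.ofReal π := by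
            rw [lintegral_const, Measure.restrict_apply_univ, Real.volume_Ioc, sub_zero]
    refine ne_top_of_le_ne_top ?_ (ENNReal.tsum_le_tsum hb)
    rw [ENNReal.tsum_mul_right]
    refine ENNReal.mul_ne_top ?_ ENNReal.ofReal_ne_top
    have : ∀ n : ℕ, ENNReal.ofReal ((4*x)^n) = (ENNReal.ofReal (4*x))^n :=
      fun n => ENNReal.ofReal_pow h40 n
    rw [tsum_congr this, ENNReal.tsum_geometric]
    refine ENNReal.inv_ne_top.mpr ?_
    simp only [ne_eq, tsub_eq_zero_iff_le, not_le]
    exact ENNReal.ofReal_lt_one.mpr h41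
  have hinter := MeasureTheory.integral_tsum hmeas hlint
  -- pointwise geometric sum
  have hptwise : ∀ t : ℝ, ∑' n : ℕ, (4*x*Real.sin t^2)^n = (1 - 4*x*Real.sin t^2)⁻¹ := by
    intro t
    apply tsum_geometric_of_lt_one (by nlinarith [sq_nonneg (Real.sin t)])
    nlinarith [Real.sin_sq_le_one t, sq_nonneg (Real.sin t)]
  rw [MeasureTheory.integral_congr_ae (Eventually.of_forall fun t => hptwise t)] at hinter
  -- evaluate the integral of the geometric limit
  have heval : ∫ t in Ioc (0:ℝ) π, (1 - 4*x*Real.sin t^2)⁻¹ = π / Real.sqrt (1 - 4*x) := by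
    rw [← intervalIntegral.integral_of_le Real.pi_pos.le]
    have : ∀ t : ℝ, (1 - 4*x*Real.sin t^2)⁻¹ = (1 - (4*x)*Real.sin t^2)⁻¹ := fun t => by ring_nf
    rw [intervalIntegral.integral_congr (fun t _ => this t),
      integral_one_div_one_sub_mul_sin_sq h40 h41]
  have hIoc : ∀ n : ℕ, ∫ t in Ioc (0:ℝ) π, (4*x*Real.sin t^2)^n
      = π * ((Nat.centralBinom n : ℝ) * x^n) := by
    intro n
    rw [← intervalIntegral.integral_of_le Real.pi_pos.le]
    exact hterm n
  rw [heval] at hinter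
  rw [tsum_congr hIoc] at hinter
  rw [tsum_mul_left] at hinter
  have hπ : (π : ℝ) ≠ 0 := Real.pi_ne_zero
  have : ∑' n : ℕ, (Nat.centralBinom n : ℝ) * x^n = 1 / Real.sqrt (1 - 4*x) := by
    refine mul_left_cancel₀ hπ ?_
    rw [← hinter]
    ring
  exact this ▸ hsummable.hasSum



lemma gAux_self (m k : ℕ) {c : ℝ} (hc : 0 < c) :
    gAux m k c c = c^(m+1) * ((k.factorial : ℝ) * (((m:ℝ)+1)⁻¹)^(k+1)) := by
  rw [gAux, sub_self]
  congr 1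
  rw [Finset.sum_eq_single 0]
  · simp [coefA]
  · intro r _ hr
    rw [zero_pow hr, mul_zero]
  · intro h; simp at h

lemma integral_sin_gAux (m k : ℕ) {b : ℝ} (hb : 0 < b) (hbpi : b ≤ π/2) :
    IntegrableOn (fun t => Real.sin t^m * (Real.log (Real.sin b) - Real.log (Real.sin t))^k
      * Real.cos t) (Ioc 0 b) ∧
    ∫ t in Ioc (0:ℝ) b, Real.sin t^m * (Real.log (Real.sin b) - Real.log (Real.sin t))^k
      * Real.cos t
      = Real.sin b^(m+1) * ((k.factorial : ℝ) * (((m:ℝ)+1)⁻¹)^(k+1)) := by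
  have hπ := Real.pi_pos
  have hφpos : ∀ t ∈ Icc (0:ℝ) b, 0 < t → 0 < Real.sin t := fun t ht h0 =>
    Real.sin_pos_of_pos_of_lt_pi h0 (lt_of_le_of_lt ht.2 (by linarith))
  have hcont := continuousOn_gAux_comp m k (Real.sin b) b Real.sin
    Real.continuous_sin.continuousOn Real.sin_zero hφpos
  have hderiv : ∀ t ∈ Ioo (0:ℝ) b, HasDerivAt (fun t => gAux m k (Real.sin b) (Real.sin t))
      (Real.sin t^m * (Real.log (Real.sin b) - Real.log (Real.sin t))^k * Real.cos t) t := by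
    intro t ht
    have hsin : 0 < Real.sin t := hφpos t ⟨ht.1.le, ht.2.le⟩ ht.1
    have h := (hasDerivAt_gAux m k (Real.sin b) hsin).comp t (Real.hasDerivAt_sin t)
    exact h
  have hnonneg : ∀ t ∈ Ioo (0:ℝ) b,
      0 ≤ Real.sin t^m * (Real.log (Real.sin b) - Real.log (Real.sin t))^k * Real.cos t := by
    intro t ht
    have hsin : 0 < Real.sin t := hφpos t ⟨ht.1.le, ht.2.le⟩ ht.1
    have hmono : Real.sin t ≤ Real.sin b := by
      apply Real.strictMonoOn_sin.monotoneOn ⟨by linarith [ht.1], by linarith [ht.2]⟩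
        ⟨by linarith, by linarith⟩ ht.2.le
    have hlog : Real.log (Real.sin t) ≤ Real.log (Real.sin b) := Real.log_le_log hsin hmono
    have hcos : 0 ≤ Real.cos t := Real.cos_nonneg_of_mem_Icc
      ⟨by linarith [ht.1], by linarith [ht.2]⟩
    have h1 : 0 ≤ (Real.log (Real.sin b) - Real.log (Real.sin t))^k :=
      pow_nonneg (by linarith) k
    exact mul_nonneg (mul_nonneg (pow_nonneg hsin.le m) h1) hcos
  have hint := integrableOn_deriv_of_nonneg hcont hderiv hnonneg
  refine ⟨hint, ?_⟩
  have hftc := intervalIntegral.integral_eq_sub_of_hasDeriv_right_of_le hb.le hcont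
    (fun t ht => (hderiv t ht).hasDerivWithinAt)
    ((intervalIntegrable_iff_integrableOn_Ioc_of_le hb.le).mpr hint)
  rw [intervalIntegral.integral_of_le hb.le] at hftc
  rw [hftc, Real.sin_zero, gAux_zero, sub_zero,
    gAux_self m k (hφpos b ⟨hb.le, le_refl b⟩ hb)]

lemma integrableOn_logpow (k : ℕ) {b : ℝ} (hb : 0 < b) (hbpi : b ≤ π) :
    IntegrableOn (fun t => (Real.log π - Real.log t)^k) (Ioc 0 b) := by
  have hcont := continuousOn_gAux_comp 0 k π b id continuousOn_id rfl (fun t _ h => h)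
  have hderiv : ∀ t ∈ Ioo (0:ℝ) b, HasDerivAt (fun t => gAux 0 k π (id t))
      ((Real.log π - Real.log t)^k) t := by
    intro t ht
    have h := hasDerivAt_gAux 0 k π ht.1
    simpa using h
  have hnonneg : ∀ t ∈ Ioo (0:ℝ) b, 0 ≤ (Real.log π - Real.log t)^k := by
    intro t ht
    have : Real.log t ≤ Real.log π := Real.log_le_log ht.1 (le_trans ht.2.le hbpi)
    have h0 : 0 ≤ Real.log π - Real.log t := by linarith
    positivity
  exact integrableOn_deriv_of_nonneg hcont hderiv hnonneg


end Stmt19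

end Stmt19Aux

theorem stmt19 (p : ℕ) (z : ℝ) (hz : 0 < z) (hz' : z ≤ 1/2) :
    ∑' n : ℕ, ((Nat.choose (2*n) n : ℝ)) * z^(2*n+1) / (2*(n:ℝ)+1)^(p+1) =
    (Real.arcsin (2*z))/2 * (Real.log (2*Real.sin (Real.arcsin (2*z))))^p / (p.factorial : ℝ)
    + (1/(4*(p.factorial : ℝ))) *
      ∑ j ∈ Finset.Icc 1 p, (-1 : ℝ)^(j-1) * (Nat.choose p j : ℝ) *
        (Real.log (2*Real.sin (Real.arcsin (2*z))))^(p-j) *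
        (-(∫ t in (0:ℝ)..(2*Real.arcsin (2*z)), (Real.log (2*Real.sin (t/2)))^j)) := by
  classical
  open MeasureTheory Set Filter in
  have hπ := Real.pi_pos
  set θ := Real.arcsin (2*z) with hθdef
  have h2z0 : (0:ℝ) < 2*z := by linarith
  have h2z1 : 2*z ≤ 1 := by linarith
  have hθpos : 0 < θ := Real.arcsin_pos.mpr h2z0
  have hθle : θ ≤ π/2 := Real.arcsin_le_pi_div_two _
  have hsinθ : Real.sin θ = 2*z := Real.sin_arcsin (by linarith) h2z1
  have hfacpos : (0:ℝ) < (p.factorial : ℝ) := by exact_mod_cast p.factorial_pos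
  set ℓ : ℝ → ℝ := fun t => Real.log (2*z) - Real.log (Real.sin t) with hℓdef
  have hsinpos : ∀ t ∈ Ioc (0:ℝ) θ, 0 < Real.sin t := fun t ht =>
    Real.sin_pos_of_pos_of_lt_pi ht.1 (by linarith [ht.2])
  have hsinle : ∀ t ∈ Ioc (0:ℝ) θ, Real.sin t ≤ 2*z := by
    intro t ht
    rw [← hsinθ]
    exact Real.strictMonoOn_sin.monotoneOn ⟨by linarith [ht.1], by linarith [ht.2]⟩
      ⟨by linarith, by linarith⟩ ht.2
  have hℓnonneg : ∀ t ∈ Ioc (0:ℝ) θ, 0 ≤ ℓ t := fun t ht =>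
    sub_nonneg.mpr (Real.log_le_log (hsinpos t ht) (hsinle t ht))
  have hcontℓ : ContinuousOn ℓ (Ioc (0:ℝ) θ) := by
    refine ContinuousOn.sub continuousOn_const ?_
    intro t ht
    exact (((Real.continuousAt_log (hsinpos t ht).ne').comp
      Real.continuous_sin.continuousAt)).continuousWithinAt
  have hℓmeas : ∀ k : ℕ, AEStronglyMeasurable (fun t => ℓ t ^ k)
      (volume.restrict (Ioc 0 θ)) := fun k =>
    ((hcontℓ.pow k).aestronglyMeasurable measurableSet_Ioc)
  have hℓbound : ∀ k : ℕ, ∀ t ∈ Ioc (0:ℝ) θ, ℓ t ^ k ≤ (Real.log π - Real.log t)^k := by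
    intro k t ht
    refine pow_le_pow_left₀ (hℓnonneg t ht) ?_ k
    have hsin_ge : 2/π * t ≤ Real.sin t := Real.mul_le_sin ht.1.le (by linarith [ht.2])
    have h2t : (0:ℝ) < 2/π * t := mul_pos (div_pos two_pos hπ) ht.1
    have hlog1 : Real.log (2/π * t) ≤ Real.log (Real.sin t) := Real.log_le_log h2t hsin_ge
    have hlog2 : Real.log (2/π*t) = Real.log 2 - Real.log π + Real.log t := by
      rw [Real.log_mul (by positivity) ht.1.ne', Real.log_div two_ne_zero (ne_of_gt hπ)]
    have hlog3 : Real.log (2*z) ≤ Real.log 2 := Real.log_le_log h2z0 (by linarith)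
    simp only [hℓdef]
    linarith
  have hℓint : ∀ k : ℕ, IntegrableOn (fun t => ℓ t ^ k) (Ioc 0 θ) := by
    intro k
    refine Integrable.mono (Stmt19.integrableOn_logpow k hθpos (by linarith)) (hℓmeas k) ?_
    refine (ae_restrict_iff' measurableSet_Ioc).mpr (Eventually.of_forall ?_)
    intro t ht
    rw [Real.norm_eq_abs, Real.norm_eq_abs, abs_of_nonneg (pow_nonneg (hℓnonneg t ht) k)]
    exact le_trans (hℓbound k t ht) (le_abs_self _)
  set Λ : ℝ := Real.log (2*(2*z)) with hΛdef
  have hΛℓ : ∀ t ∈ Ioc (0:ℝ) θ, Real.log (2*Real.sin t) = Λ - ℓ t := by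
    intro t ht
    rw [hΛdef, hℓdef]
    rw [Real.log_mul two_ne_zero (hsinpos t ht).ne', Real.log_mul two_ne_zero (by linarith)]
    ring
  have hexpand : ∀ (j : ℕ) (t : ℝ), t ∈ Ioc (0:ℝ) θ →
      (Real.log (2*Real.sin t))^j
        = ∑ i ∈ Finset.range (j+1), ((-1:ℝ)^i * (j.choose i : ℝ) * Λ^(j-i)) * ℓ t ^ i := by
    intro j t ht
    rw [hΛℓ t ht, show Λ - ℓ t = (-ℓ t) + Λ by ring, add_pow]
    refine Finset.sum_congr rfl fun i hi => ?_
    rw [neg_pow]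
    ring
  have h2sin_int : ∀ j : ℕ, IntegrableOn (fun t => (Real.log (2*Real.sin t))^j) (Ioc 0 θ) := by
    intro j
    have hs : IntegrableOn (fun t => ∑ i ∈ Finset.range (j+1),
        ((-1:ℝ)^i * (j.choose i : ℝ) * Λ^(j-i)) * ℓ t ^ i) (Ioc 0 θ) :=
      integrable_finset_sum _ (fun i _ => (hℓint i).const_mul _)
    exact hs.congr_fun (fun t ht => (hexpand j t ht).symm) measurableSet_Ioc
  -- per-n integrand
  set v : ℕ → ℝ := fun n =>
    ((Nat.choose (2*n) n : ℝ)) * z^(2*n+1) / (2*(n:ℝ)+1)^(p+1) with hvdef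
  set f : ℕ → ℝ → ℝ := fun n t => (Nat.centralBinom n : ℝ)/((4:ℝ)^n * (2 * p.factorial)) *
      (Real.sin t^(2*n) * ℓ t^p * Real.cos t) with hfdef
  have hvnonneg : ∀ n, 0 ≤ v n := by
    intro n
    have h : 0 ≤ ((Nat.choose (2*n) n : ℝ)) * z^(2*n+1) / (2*(n:ℝ)+1)^(p+1) := by positivity
    simpa [hvdef] using h
  have hkey : ∀ n : ℕ,
      IntegrableOn (fun t => Real.sin t^(2*n) * ℓ t^p * Real.cos t) (Ioc 0 θ) ∧
      ∫ t in Ioc (0:ℝ) θ, Real.sin t^(2*n) * ℓ t^p * Real.cos t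
        = (2*z)^(2*n+1) * ((p.factorial : ℝ) * ((((2*n : ℕ):ℝ)+1)⁻¹)^(p+1)) := by
    intro n
    have h := Stmt19.integral_sin_gAux (2*n) p hθpos hθle
    rw [hsinθ] at h
    simp only [hℓdef]
    exact h
  have hIntf : ∀ n : ℕ, IntegrableOn (f n) (Ioc 0 θ) := by
    intro n
    rw [hfdef]
    exact ((hkey n).1.const_mul _)
  have hvalf : ∀ n : ℕ, ∫ t in Ioc (0:ℝ) θ, f n t = v n := by
    intro n
    simp only [hfdef, hvdef]
    rw [MeasureTheory.integral_const_mul, (hkey n).2]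
    have hcb : (Nat.centralBinom n : ℝ) = (Nat.choose (2*n) n : ℝ) := by
      rw [Nat.centralBinom_eq_two_mul_choose]
    rw [hcb]
    have hcast : (((2*n : ℕ):ℝ)+1) = 2*(n:ℝ)+1 := by push_cast; ring
    rw [hcast]
    have h2pow : (2*z)^(2*n+1) = (4:ℝ)^n * 2 * z^(2*n+1) := by
      rw [mul_pow]
      congr 1
      rw [pow_succ, pow_mul]
      norm_num
    rw [h2pow]
    have hden : (0:ℝ) < 2*(n:ℝ)+1 := by positivity
    have h4 : (0:ℝ) < (4:ℝ)^n := by positivity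
    rw [inv_pow]
    field_simp
  -- pointwise HasSum on Ioo
  have hHS : ∀ t ∈ Ioo (0:ℝ) θ, HasSum (fun n => f n t)
      (ℓ t^p / (2*(p.factorial : ℝ))) := by
    intro t ht
    have htIoc : t ∈ Ioc (0:ℝ) θ := ⟨ht.1, ht.2.le⟩
    have hsint : 0 < Real.sin t := hsinpos t htIoc
    have hsinlt : Real.sin t < 2*z := by
      rw [← hsinθ]
      exact Real.strictMonoOn_sin ⟨by linarith [ht.1], by linarith [ht.2]⟩
        ⟨by linarith, by linarith⟩ ht.2
    have hcos : 0 < Real.cos t := Real.cos_pos_of_mem_Ioo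
      ⟨by linarith [ht.1], lt_of_lt_of_le ht.2 hθle⟩
    have hx0 : 0 ≤ Real.sin t^2/4 := by positivity
    have hx : Real.sin t^2/4 < 1/4 := by nlinarith
    have hGF := Stmt19.hasSum_centralBinom hx0 hx
    have hsqrt : Real.sqrt (1 - 4*(Real.sin t^2/4)) = Real.cos t := by
      have h1 : 1 - 4*(Real.sin t^2/4) = Real.cos t^2 := by
        have := Real.sin_sq_add_cos_sq t
        linarith
      rw [h1, Real.sqrt_sq hcos.le]
    have hmul := hGF.mul_right (Real.cos t * ℓ t^p / (2*(p.factorial : ℝ)))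
    have hfun : (fun n => (Nat.centralBinom n : ℝ) * (Real.sin t^2/4)^n *
        (Real.cos t * ℓ t^p / (2*(p.factorial : ℝ)))) = fun n => f n t := by
      funext n
      rw [hfdef]
      simp only
      rw [div_pow, ← pow_mul]
      have h4 : ((4:ℝ))^n ≠ 0 := by positivity
      field_simp
    have hval : 1 / Real.sqrt (1 - 4*(Real.sin t^2/4)) *
        (Real.cos t * ℓ t^p / (2*(p.factorial : ℝ))) = ℓ t^p / (2*(p.factorial : ℝ)) := by
      rw [hsqrt]
      field_simp
    rw [hfun, hval] at hmul
    exact hmul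
  have hfnonneg : ∀ n : ℕ, ∀ t ∈ Ioc (0:ℝ) θ, 0 ≤ f n t := by
    intro n t ht
    rw [hfdef]
    simp only
    have hcos : 0 ≤ Real.cos t := Real.cos_nonneg_of_mem_Icc
      ⟨by linarith [ht.1], by linarith [ht.2]⟩
    have h1 := hℓnonneg t ht
    have h2 : 0 ≤ Real.sin t := (hsinpos t ht).le
    positivity
  -- partial sum bound
  have hpart : ∀ s : Finset ℕ, ∑ n ∈ s, v n
      ≤ ∫ t in Ioc (0:ℝ) θ, ℓ t^p / (2*(p.factorial : ℝ)) := by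
    intro s
    have h1 : ∑ n ∈ s, v n = ∫ t in Ioc (0:ℝ) θ, ∑ n ∈ s, f n t := by
      rw [MeasureTheory.integral_finset_sum s (fun n _ => hIntf n)]
      exact (Finset.sum_congr rfl fun n _ => (hvalf n).symm)
    rw [h1, MeasureTheory.integral_Ioc_eq_integral_Ioo,
      MeasureTheory.integral_Ioc_eq_integral_Ioo]
    refine MeasureTheory.setIntegral_mono_on
      (MeasureTheory.integrable_finset_sum s (fun n _ => MeasureTheory.IntegrableOn.mono_set (hIntf n) Ioo_subset_Ioc_self))
      (MeasureTheory.IntegrableOn.mono_set ((hℓint p).div_const _) Ioo_subset_Ioc_self) measurableSet_Ioo ?_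
    intro t ht
    exact sum_le_hasSum s (fun n _ => hfnonneg n t ⟨ht.1, ht.2.le⟩) (hHS t ht)
  -- summability data in ℝ≥0∞
  have hlint_eq : ∀ n : ℕ, ∫⁻ t, ‖f n t‖₊ ∂(volume.restrict (Ioo 0 θ))
      = ENNReal.ofReal (v n) := by
    intro n
    have hint_Ioo : IntegrableOn (f n) (Ioo 0 θ) := MeasureTheory.IntegrableOn.mono_set (hIntf n) Ioo_subset_Ioc_self
    have h1 : ∀ᵐ t ∂(volume.restrict (Ioo (0:ℝ) θ)), 0 ≤ f n t :=
      (ae_restrict_iff' measurableSet_Ioo).mpr (Eventually.of_forall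
        (fun t ht => hfnonneg n t ⟨ht.1, ht.2.le⟩))
    have h2 := MeasureTheory.ofReal_integral_eq_lintegral_ofReal hint_Ioo h1
    have h3 : ∫⁻ t, ‖f n t‖₊ ∂(volume.restrict (Ioo 0 θ))
        = ∫⁻ t, ENNReal.ofReal (f n t) ∂(volume.restrict (Ioo 0 θ)) := by
      refine lintegral_congr_ae ?_
      filter_upwards [h1] with t ht
      rw [← enorm_eq_nnnorm, Real.enorm_eq_ofReal_abs, abs_of_nonneg ht]
    rw [h3, ← h2, ← MeasureTheory.integral_Ioc_eq_integral_Ioo, hvalf n]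
  have hne_top : ∑' n : ℕ, ∫⁻ t, ‖f n t‖₊ ∂(volume.restrict (Ioo 0 θ)) ≠ ⊤ := by
    rw [tsum_congr hlint_eq]
    have hB : ∑' n : ℕ, ENNReal.ofReal (v n)
        ≤ ENNReal.ofReal (∫ t in Ioc (0:ℝ) θ, ℓ t^p / (2*(p.factorial : ℝ))) := by
      rw [ENNReal.tsum_eq_iSup_sum]
      refine iSup_le fun s => ?_
      rw [← ENNReal.ofReal_sum_of_nonneg (fun n _ => hvnonneg n)]
      exact ENNReal.ofReal_le_ofReal (hpart s)
    exact ne_top_of_le_ne_top ENNReal.ofReal_ne_top hB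
  have hmeasf : ∀ n : ℕ, AEStronglyMeasurable (f n) (volume.restrict (Ioo 0 θ)) := by
    intro n
    rw [hfdef]
    refine (ContinuousOn.aestronglyMeasurable ?_ measurableSet_Ioo)
    refine ContinuousOn.mul continuousOn_const ?_
    refine ContinuousOn.mul (ContinuousOn.mul ?_ ?_) Real.continuous_cos.continuousOn
    · exact (Real.continuous_sin.continuousOn).pow _
    · exact ((hcontℓ.mono Ioo_subset_Ioc_self).pow p)
  have hitsum := MeasureTheory.integral_tsum hmeasf hne_top
  -- identify both sides of the interchange
  have htsum_eq : ∑' n : ℕ, v n = ∫ t in Ioc (0:ℝ) θ, ℓ t^p / (2*(p.factorial : ℝ)) := by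
    have e1 : ∑' n : ℕ, v n = ∑' n : ℕ, ∫ t in Ioo (0:ℝ) θ, f n t := by
      refine tsum_congr fun n => ?_
      rw [← MeasureTheory.integral_Ioc_eq_integral_Ioo, hvalf n]
    have e2 : ∫ t in Ioo (0:ℝ) θ, (∑' n : ℕ, f n t)
        = ∫ t in Ioo (0:ℝ) θ, ℓ t^p / (2*(p.factorial : ℝ)) := by
      refine MeasureTheory.integral_congr_ae ?_
      refine (ae_restrict_iff' measurableSet_Ioo).mpr (Eventually.of_forall ?_)
      intro t ht
      exact (hHS t ht).tsum_eq
    rw [e1, ← hitsum, e2, ← MeasureTheory.integral_Ioc_eq_integral_Ioo]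
  -- binomial expansion of the integral
  have hJint : ∀ j : ℕ, IntervalIntegrable (fun t => (Real.log (2*Real.sin t))^j) volume 0 θ :=
    fun j => (intervalIntegrable_iff_integrableOn_Ioc_of_le hθpos.le).mpr (h2sin_int j)
  have hexp2 : ∫ t in Ioc (0:ℝ) θ, ℓ t^p
      = ∑ j ∈ Finset.range (p+1), ((-1:ℝ)^j * (p.choose j : ℝ) * Λ^(p-j))
          * ∫ t in Ioc (0:ℝ) θ, (Real.log (2*Real.sin t))^j := by
    have e1 : ∫ t in Ioc (0:ℝ) θ, ℓ t^p
        = ∫ t in Ioc (0:ℝ) θ, ∑ j ∈ Finset.range (p+1),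
            ((-1:ℝ)^j * (p.choose j : ℝ) * Λ^(p-j)) * (Real.log (2*Real.sin t))^j := by
      refine MeasureTheory.setIntegral_congr_fun measurableSet_Ioc ?_
      intro t ht
      simp only
      have h1 : ℓ t = (- Real.log (2*Real.sin t)) + Λ := by
        rw [hΛℓ t ht]; ring
      rw [h1, add_pow]
      refine Finset.sum_congr rfl fun j hj => ?_
      rw [neg_pow]
      ring
    rw [e1, MeasureTheory.integral_finset_sum _ (fun j _ => (h2sin_int j).const_mul _)]
    exact Finset.sum_congr rfl fun j _ => MeasureTheory.integral_const_mul _ _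
  -- relate the statement's Ls integral to J j
  have hLs : ∀ j : ℕ, (∫ t in (0:ℝ)..(2*θ), (Real.log (2*Real.sin (t/2)))^j)
      = 2 * ∫ t in Ioc (0:ℝ) θ, (Real.log (2*Real.sin t))^j := by
    intro j
    have h := intervalIntegral.integral_comp_div
      (a := (0:ℝ)) (b := 2*θ) (fun u => (Real.log (2*Real.sin u))^j) two_ne_zero
    rw [h]
    norm_num
    rw [intervalIntegral.integral_of_le hθpos.le]
  -- value of J 0
  have hJ0 : ∫ t in Ioc (0:ℝ) θ, (Real.log (2*Real.sin t))^0 = θ := by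
    simp [Real.volume_Ioc, hθpos.le]
  -- final assembly
  rw [hsinθ]
  have hgoalL : (∑' n : ℕ, ((Nat.choose (2*n) n : ℝ)) * z^(2*n+1) / (2*(n:ℝ)+1)^(p+1))
      = ∑' n : ℕ, v n := by rw [hvdef]
  rw [hgoalL, htsum_eq]
  have hdiv : ∫ t in Ioc (0:ℝ) θ, ℓ t^p / (2*(p.factorial : ℝ))
      = (∫ t in Ioc (0:ℝ) θ, ℓ t^p) / (2*(p.factorial : ℝ)) := by
    exact MeasureTheory.integral_div _ _
  rw [hdiv, hexp2]
  -- split off j = 0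
  have hsplit : Finset.range (p+1) = insert 0 (Finset.Icc 1 p) := by
    ext i
    simp only [Finset.mem_range, Finset.mem_insert, Finset.mem_Icc]
    omega
  rw [hsplit, Finset.sum_insert (by simp)]
  simp only [pow_zero, one_mul, Nat.choose_zero_right, Nat.cast_one, Nat.sub_zero, hJ0]
  rw [add_div, Finset.sum_div]
  congr 1
  · field_simp
    have hJ0' : ∫ t in Ioc (0:ℝ) θ, (1:ℝ) = θ := by simpa using hJ0
    have hΛ4 : Λ = Real.log (z*4) := by rw [hΛdef]; ring_nf
    rw [hJ0', hΛ4]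
    ring
  · rw [Finset.mul_sum]
    refine Finset.sum_congr rfl fun j hj => ?_
    have hj1 : 1 ≤ j := (Finset.mem_Icc.mp hj).1
    rw [hLs j]
    have hsign : (-1:ℝ)^j = (-1:ℝ)^(j-1) * (-1) := by
      conv_lhs => rw [← Nat.succ_pred_eq_of_pos hj1]
      rw [pow_succ, Nat.pred_eq_sub_one]
    rw [hsign]
    field_simp
    have hΛ4 : Λ = Real.log (z*4) := by rw [hΛdef]; ring_nf
    rw [hΛ4]
    ring
end
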